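/- arXiv:2505.06156 — 9 statements merged into one kernel-verified Lean document; each statement's English description precedes it below -/
import Mathlib

section
/- Let Q be a real 2×2 orthogonal matrix and let P2 = [[1,0],[0,−1]]. Then Q P2 Qᵀ = P2 if and only if Q ∈ {I, −I, P2, −P2}, where I is the 2×2 identity. In other words, the structural tensor P2 characterizes the 2D point group C2v = {identity, rotation by π, reflection about the x-axis, reflection about the y-axis} within O(2). -/
open Matrix

/-- Zheng's second-order structural tensor `P2 = a1⊗a1 − a2⊗a2 = [[1,0],[0,-1]]`. -/
noncomputable def P2 : Matrix (Fin 2) (Fin 2) ℝ := !![1, 0; 0, -1]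

/-- For `Q ∈ O(2)`, `Q P2 Qᵀ = P2` iff `Q ∈ {I, -I, P2, -P2}`, i.e. the structural
tensor `P2` characterizes the 2D point group `C2v` within `O(2)`. -/
theorem stmt_1 (Q : Matrix (Fin 2) (Fin 2) ℝ) (hQ : Q * Qᵀ = 1) :
    Q * P2 * Qᵀ = P2 ↔ (Q = 1 ∨ Q = -1 ∨ Q = P2 ∨ Q = -P2) := by
  set a := Q 0 0 with ha'
  set b := Q 0 1 with hb'
  set c := Q 1 0 with hc'
  set d := Q 1 1 with hd'
  have h00 := congrFun (congrFun hQ 0) 0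
  have h01 := congrFun (congrFun hQ 0) 1
  have h11 := congrFun (congrFun hQ 1) 1
  simp [Matrix.mul_apply, Fin.sum_univ_two, Matrix.one_apply] at h00 h01 h11
  constructor
  · intro h
    have e00 := congrFun (congrFun h 0) 0
    have e11 := congrFun (congrFun h 1) 1
    simp [P2, Matrix.mul_apply, Fin.sum_univ_two] at e00 e11
    have hb : b = 0 := by
      have : b * b = 0 := by nlinarith
      exact mul_self_eq_zero.mp this
    have hc : c = 0 := by
      have : c * c = 0 := by nlinarith
      exact mul_self_eq_zero.mp this
    have haa : a = 1 ∨ a = -1 := mul_self_eq_one_iff.mp (by nlinarith)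
    have hdd : d = 1 ∨ d = -1 := mul_self_eq_one_iff.mp (by nlinarith)
    rcases haa with ha1 | ha1 <;> rcases hdd with hd1 | hd1
    · left
      ext i j; fin_cases i <;> fin_cases j <;>
        simp [← ha', ← hb', ← hc', ← hd', ha1, hb, hc, hd1, Matrix.one_apply]
    · right; right; left
      ext i j; fin_cases i <;> fin_cases j <;>
        simp [P2, ← ha', ← hb', ← hc', ← hd', ha1, hb, hc, hd1]
    · right; right; right
      ext i j; fin_cases i <;> fin_cases j <;>
        simp [P2, ← ha', ← hb', ← hc', ← hd', ha1, hb, hc, hd1]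
    · right; left
      ext i j; fin_cases i <;> fin_cases j <;>
        simp [← ha', ← hb', ← hc', ← hd', ha1, hb, hc, hd1, Matrix.one_apply]
  · rintro (rfl | rfl | rfl | rfl)
    · simp
    · simp [Matrix.neg_mul, Matrix.mul_neg]
    · ext i j; fin_cases i <;> fin_cases j <;>
        simp [P2, Matrix.mul_apply, Fin.sum_univ_two, Matrix.vecHead, Matrix.vecTail]
    · ext i j; fin_cases i <;> fin_cases j <;>
        simp [P2, Matrix.mul_apply, Fin.sum_univ_two, Matrix.vecHead, Matrix.vecTail]
end

section
/- Let Q be a real 2×2 orthogonal matrix, P2 = [[1,0],[0,−1]] and ε = [[0,1],[−1,0]]. Then (Q P2 Qᵀ = P2 and Q ε Qᵀ = ε) if and only if Q = I or Q = −I. In other words, the structural tensor pair {P2, ε} characterizes the 2D point group C2 = {identity, rotation by π} within O(2). -/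
open Matrix

/-- The 2D permutation tensor ε = [[0,1],[-1,0]]. -/
noncomputable def eps : Matrix (Fin 2) (Fin 2) ℝ := !![0, 1; -1, 0]

/-- For `Q ∈ O(2)`, (`Q P2 Qᵀ = P2` and `Q ε Qᵀ = ε`) iff `Q = 1` or `Q = -1`,
i.e. the structural tensor pair `{P2, ε}` characterizes the 2D point group `C2`
within `O(2)`. -/
theorem stmt_2 (Q : Matrix (Fin 2) (Fin 2) ℝ) (hQ : Q * Qᵀ = 1) :
    (Q * P2 * Qᵀ = P2 ∧ Q * eps * Qᵀ = eps) ↔ (Q = 1 ∨ Q = -1) := by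
  rw [Matrix.eta_fin_two Q] at hQ ⊢
  set a := Q 0 0; set b := Q 0 1; set c := Q 1 0; set d := Q 1 1
  simp only [P2, eps, Matrix.mul_fin_two] at *
  rw [show (!![a, b; c, d])ᵀ = !![a, c; b, d] by ext i j; fin_cases i <;> fin_cases j <;> rfl]
    at hQ ⊢
  simp only [Matrix.mul_fin_two, ← Matrix.ext_iff, Fin.forall_fin_two] at hQ ⊢
  simp only [Matrix.cons_val', Matrix.cons_val_zero, Matrix.cons_val_one, Matrix.head_cons,
    Matrix.head_fin_const, Matrix.one_apply, Matrix.neg_apply, Matrix.empty_val',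
    Matrix.cons_val_fin_one] at hQ ⊢
  norm_num at hQ ⊢
  obtain ⟨⟨h1, h2⟩, h3, h4⟩ := hQ
  constructor
  · rintro ⟨⟨⟨e1, e2⟩, e3, e4⟩, ⟨f1, f2⟩, f3, f4⟩
    have hb : b = 0 := by nlinarith [sq_nonneg b, sq_nonneg c, sq_nonneg (b + c), sq_nonneg (b - c)]
    have hc : c = 0 := by nlinarith [sq_nonneg b, sq_nonneg c, sq_nonneg (b + c), sq_nonneg (b - c)]
    have had : a = d := by nlinarith [sq_nonneg (a - d), sq_nonneg (a + d)]
    have : a = 1 ∨ a = -1 := by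
      have h0 : (a - 1) * (a + 1) = 0 := by nlinarith
      rcases mul_eq_zero.mp h0 with h | h
      · left; linarith
      · right; linarith
    rcases this with h | h <;> [left; right] <;>
      exact ⟨⟨h, hb⟩, hc, by rw [← had, h]⟩
  · rintro (⟨⟨g1, g2⟩, g3, g4⟩ | ⟨⟨g1, g2⟩, g3, g4⟩) <;> rw [g1, g2, g3, g4] <;> norm_num
end

section
/- Let Q be a real 2×2 orthogonal matrix, M1 = [[1,0],[0,0]] and M2 = [[0,0],[0,1]]. Then Q maps the set {M1, M2} to itself under conjugation, i.e. either (Q M1 Qᵀ = M1 and Q M2 Qᵀ = M2) or (Q M1 Qᵀ = M2 and Q M2 Qᵀ = M1), if and only if Q belongs to the subgroup of O(2) generated by the rotation R_{π/2} = [[0,−1],[1,0]] and the reflection [[1,0],[0,−1]] (the dihedral group of order 8). In other words, the structural tensor set {M1, M2} characterizes the 2D point group C4v. -/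
open Matrix

/-- `M1 = e1 ⊗ e1 = [[1,0],[0,0]]`. -/
noncomputable def M1 : Matrix (Fin 2) (Fin 2) ℝ := !![1, 0; 0, 0]

/-- `M2 = e2 ⊗ e2 = [[0,0],[0,1]]`. -/
noncomputable def M2 : Matrix (Fin 2) (Fin 2) ℝ := !![0, 0; 0, 1]

/-- The rotation `R_{π/2} = [[0,-1],[1,0]]` as an element of `O(2)`. -/
noncomputable def rotHalfPi : Matrix.orthogonalGroup (Fin 2) ℝ :=
  ⟨!![0, -1; 1, 0], by
    rw [Matrix.mem_orthogonalGroup_iff]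
    ext i j
    fin_cases i <;> fin_cases j <;>
      simp [Matrix.mul_apply, Fin.sum_univ_two, Matrix.one_apply]⟩

/-- The reflection `[[1,0],[0,-1]]` (about the x-axis) as an element of `O(2)`. -/
noncomputable def reflX : Matrix.orthogonalGroup (Fin 2) ℝ :=
  ⟨!![1, 0; 0, -1], by
    rw [Matrix.mem_orthogonalGroup_iff]
    ext i j
    fin_cases i <;> fin_cases j <;>
      simp [Matrix.mul_apply, Fin.sum_univ_two, Matrix.one_apply]⟩

/-- The point group `C4v`: the subgroup of `O(2)` generated by the rotation `R_{π/2}`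
and the reflection `[[1,0],[0,-1]]` (the dihedral group of order 8). -/
noncomputable def C4v : Subgroup (Matrix.orthogonalGroup (Fin 2) ℝ) :=
  Subgroup.closure {rotHalfPi, reflX}

/-- The conjugation condition, abstracted. -/
def Cond (A : Matrix (Fin 2) (Fin 2) ℝ) : Prop :=
  (A * M1 * Aᵀ = M1 ∧ A * M2 * Aᵀ = M2) ∨
    (A * M1 * Aᵀ = M2 ∧ A * M2 * Aᵀ = M1)

lemma cond_mul {A B : Matrix (Fin 2) (Fin 2) ℝ} (hA : Cond A) (hB : Cond B) :
    Cond (A * B) := by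
  have e1 : (A * B) * M1 * (A * B)ᵀ = A * (B * M1 * Bᵀ) * Aᵀ := by
    rw [Matrix.transpose_mul]; noncomm_ring
  have e2 : (A * B) * M2 * (A * B)ᵀ = A * (B * M2 * Bᵀ) * Aᵀ := by
    rw [Matrix.transpose_mul]; noncomm_ring
  unfold Cond
  rw [e1, e2]
  rcases hA with ⟨hA1, hA2⟩ | ⟨hA1, hA2⟩ <;> rcases hB with ⟨hB1, hB2⟩ | ⟨hB1, hB2⟩ <;>
    rw [hB1, hB2] <;> [left; right; right; left] <;> exact ⟨by assumption, by assumption⟩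

lemma cond_inv {A : Matrix (Fin 2) (Fin 2) ℝ} (hQ : A * Aᵀ = 1) (hA : Cond A) :
    Cond Aᵀ := by
  have hQ' : Aᵀ * A = 1 := mul_eq_one_comm.mp hQ
  have key : ∀ X Y : Matrix (Fin 2) (Fin 2) ℝ, A * X * Aᵀ = Y → Aᵀ * Y * Aᵀᵀ = X := by
    intro X Y h
    rw [Matrix.transpose_transpose, ← h]
    calc Aᵀ * (A * X * Aᵀ) * A = (Aᵀ * A) * X * (Aᵀ * A) := by noncomm_ring
    _ = X := by rw [hQ']; simp
  rcases hA with ⟨h1, h2⟩ | ⟨h1, h2⟩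
  · exact Or.inl ⟨key _ _ h1, key _ _ h2⟩
  · exact Or.inr ⟨key _ _ h2, key _ _ h1⟩

lemma cond_gen_rot : Cond (rotHalfPi : Matrix (Fin 2) (Fin 2) ℝ) := by
  right
  constructor <;> · ext i j; fin_cases i <;> fin_cases j <;>
    norm_num [rotHalfPi, M1, M2, Matrix.mul_apply, Fin.sum_univ_two, Matrix.transpose_apply, Matrix.vecHead, Matrix.vecTail]

lemma cond_gen_refl : Cond (reflX : Matrix (Fin 2) (Fin 2) ℝ) := by
  left
  constructor <;> · ext i j; fin_cases i <;> fin_cases j <;>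
    norm_num [reflX, M1, M2, Matrix.mul_apply, Fin.sum_univ_two, Matrix.transpose_apply, Matrix.vecHead, Matrix.vecTail]

lemma cond_of_mem {P : Matrix.orthogonalGroup (Fin 2) ℝ} (hP : P ∈ C4v) :
    Cond (P : Matrix (Fin 2) (Fin 2) ℝ) := by
  induction hP using Subgroup.closure_induction with
  | mem x hx =>
    rcases hx with rfl | rfl
    · exact cond_gen_rot
    · exact cond_gen_refl
  | one => left; constructor <;> simp
  | mul x y _ _ hx hy => exact cond_mul hx hy
  | inv x _ hx =>
    have hxo : (x : Matrix (Fin 2) (Fin 2) ℝ) * (x : Matrix (Fin 2) (Fin 2) ℝ)ᵀ = 1 := by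
      have := x.2
      rw [Matrix.mem_orthogonalGroup_iff] at this
      exact this
    have hco : ((x⁻¹ : Matrix.orthogonalGroup (Fin 2) ℝ) : Matrix (Fin 2) (Fin 2) ℝ) =
        (x : Matrix (Fin 2) (Fin 2) ℝ)ᵀ := by
      simp [Matrix.UnitaryGroup.inv_val, Matrix.star_eq_conjTranspose]
    rw [hco]
    exact cond_inv hxo hx

lemma rot_mem : rotHalfPi ∈ C4v := Subgroup.subset_closure (by simp)
lemma refl_mem : reflX ∈ C4v := Subgroup.subset_closure (by simp)

/-- For `Q ∈ O(2)`, conjugation by `Q` maps the set `{M1, M2}` to itself iff `Q`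
belongs to the dihedral group of order 8 generated by `R_{π/2}` and the reflection
`[[1,0],[0,-1]]`: the structural tensor set `{M1, M2}` characterizes `C4v`. -/
theorem stmt_3 (Q : Matrix (Fin 2) (Fin 2) ℝ) (hQ : Q * Qᵀ = 1) :
    ((Q * M1 * Qᵀ = M1 ∧ Q * M2 * Qᵀ = M2) ∨
      (Q * M1 * Qᵀ = M2 ∧ Q * M2 * Qᵀ = M1)) ↔
    ∃ P ∈ C4v, (P : Matrix (Fin 2) (Fin 2) ℝ) = Q := by
  constructor
  · rintro (⟨h1, h2⟩ | ⟨h1, h2⟩)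
    · have e1 := congrFun (congrFun h1 0) 0
      have e2 := congrFun (congrFun h1 1) 1
      have e3 := congrFun (congrFun h2 0) 0
      have e4 := congrFun (congrFun h2 1) 1
      simp [M1, M2, Matrix.mul_apply, Fin.sum_univ_two] at e1 e2 e3 e4
      rcases mul_self_eq_one_iff.mp e1 with ha | ha <;>
        rcases mul_self_eq_one_iff.mp e4 with hd | hd
      · exact ⟨1, one_mem _, by ext i j; fin_cases i <;> fin_cases j <;>
          simp [ha, hd, e2, e3]⟩
      · exact ⟨reflX, refl_mem, by ext i j; fin_cases i <;> fin_cases j <;>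
          simp [reflX, ha, hd, e2, e3]⟩
      · refine ⟨rotHalfPi * rotHalfPi * reflX, mul_mem (mul_mem rot_mem rot_mem) refl_mem, ?_⟩
        have : ((rotHalfPi * rotHalfPi * reflX : Matrix.orthogonalGroup (Fin 2) ℝ) :
            Matrix (Fin 2) (Fin 2) ℝ) = (rotHalfPi : Matrix (Fin 2) (Fin 2) ℝ) *
            (rotHalfPi : Matrix (Fin 2) (Fin 2) ℝ) * (reflX : Matrix (Fin 2) (Fin 2) ℝ) := rfl
        rw [this]
        ext i j; fin_cases i <;> fin_cases j <;>
          simp [rotHalfPi, reflX, Matrix.mul_apply, Fin.sum_univ_two, ha, hd, e2, e3]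
      · refine ⟨rotHalfPi * rotHalfPi, mul_mem rot_mem rot_mem, ?_⟩
        have : ((rotHalfPi * rotHalfPi : Matrix.orthogonalGroup (Fin 2) ℝ) :
            Matrix (Fin 2) (Fin 2) ℝ) = (rotHalfPi : Matrix (Fin 2) (Fin 2) ℝ) *
            (rotHalfPi : Matrix (Fin 2) (Fin 2) ℝ) := rfl
        rw [this]
        ext i j; fin_cases i <;> fin_cases j <;>
          simp [rotHalfPi, Matrix.mul_apply, Fin.sum_univ_two, ha, hd, e2, e3]
    · have e1 := congrFun (congrFun h1 0) 0
      have e2 := congrFun (congrFun h1 1) 1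
      have e3 := congrFun (congrFun h2 0) 0
      have e4 := congrFun (congrFun h2 1) 1
      simp [M1, M2, Matrix.mul_apply, Fin.sum_univ_two] at e1 e2 e3 e4
      rcases mul_self_eq_one_iff.mp e2 with hc | hc <;>
        rcases mul_self_eq_one_iff.mp e3 with hb | hb
      · refine ⟨rotHalfPi * reflX, mul_mem rot_mem refl_mem, ?_⟩
        have : ((rotHalfPi * reflX : Matrix.orthogonalGroup (Fin 2) ℝ) :
            Matrix (Fin 2) (Fin 2) ℝ) = (rotHalfPi : Matrix (Fin 2) (Fin 2) ℝ) *
            (reflX : Matrix (Fin 2) (Fin 2) ℝ) := rfl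
        rw [this]
        ext i j; fin_cases i <;> fin_cases j <;>
          simp [rotHalfPi, reflX, Matrix.mul_apply, Fin.sum_univ_two, hb, hc, e1, e4]
      · exact ⟨rotHalfPi, rot_mem, by ext i j; fin_cases i <;> fin_cases j <;>
          simp [rotHalfPi, hb, hc, e1, e4]⟩
      · refine ⟨rotHalfPi⁻¹, inv_mem rot_mem, ?_⟩
        have : ((rotHalfPi⁻¹ : Matrix.orthogonalGroup (Fin 2) ℝ) :
            Matrix (Fin 2) (Fin 2) ℝ) = (rotHalfPi : Matrix (Fin 2) (Fin 2) ℝ)ᵀ := by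
          simp [Matrix.UnitaryGroup.inv_val, Matrix.star_eq_conjTranspose]
        rw [this]
        ext i j; fin_cases i <;> fin_cases j <;>
          simp [rotHalfPi, hb, hc, e1, e4]
      · refine ⟨reflX * rotHalfPi, mul_mem refl_mem rot_mem, ?_⟩
        have : ((reflX * rotHalfPi : Matrix.orthogonalGroup (Fin 2) ℝ) :
            Matrix (Fin 2) (Fin 2) ℝ) = (reflX : Matrix (Fin 2) (Fin 2) ℝ) *
            (rotHalfPi : Matrix (Fin 2) (Fin 2) ℝ) := rfl
        rw [this]
        ext i j; fin_cases i <;> fin_cases j <;>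
          simp [rotHalfPi, reflX, Matrix.mul_apply, Fin.sum_univ_two, hb, hc, e1, e4]
  · rintro ⟨P, hP, rfl⟩
    exact cond_of_mem hP
end

section
/- Let v1 = (0,1), v2 = (√3/2, −1/2), v3 = (−√3/2, −1/2) in ℝ², ε = [[0,1],[−1,0]], and let Q be a real 2×2 orthogonal matrix. Then Q maps the set {v1, v2, v3} to itself and satisfies Q ε Qᵀ = ε if and only if Q ∈ {I, R_{2π/3}, R_{2π/3}²}, where R_{2π/3} = [[−1/2, −√3/2],[√3/2, −1/2]]. In other words, the structural tensor set {v1, v2, v3, ε} characterizes the 2D point group C3 of rotations by multiples of 2π/3. -/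
open Matrix

/-- `v1 = (0, 1)`. -/
noncomputable def v1 : Fin 2 → ℝ := ![0, 1]

/-- `v2 = (√3/2, -1/2)`. -/
noncomputable def v2 : Fin 2 → ℝ := ![Real.sqrt 3 / 2, -(1 / 2)]

/-- `v3 = (-√3/2, -1/2)`. -/
noncomputable def v3 : Fin 2 → ℝ := ![-(Real.sqrt 3 / 2), -(1 / 2)]

/-- The rotation `R_{2π/3} = [[-1/2, -√3/2],[√3/2, -1/2]]`. -/
noncomputable def rot2PiOver3 : Matrix (Fin 2) (Fin 2) ℝ :=
  !![-(1 / 2), -(Real.sqrt 3 / 2); Real.sqrt 3 / 2, -(1 / 2)]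

lemma s3 : Real.sqrt 3 * Real.sqrt 3 = 3 := Real.mul_self_sqrt (by norm_num)

lemma mulVec2 (M : Matrix (Fin 2) (Fin 2) ℝ) (x y : ℝ) :
    M.mulVec ![x, y] = ![M 0 0 * x + M 0 1 * y, M 1 0 * x + M 1 1 * y] := by
  funext i; fin_cases i <;> simp [Matrix.mulVec, dotProduct, Fin.sum_univ_two]

lemma rot_sq : rot2PiOver3 ^ 2 = !![-(1/2), Real.sqrt 3 / 2; -(Real.sqrt 3 / 2), -(1/2)] := by
  rw [pow_two]
  ext i j
  fin_cases i <;> fin_cases j <;>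
    simp [rot2PiOver3, Matrix.mul_apply, Fin.sum_univ_two] <;> nlinarith [s3]

set_option maxHeartbeats 1000000 in
/-- For `Q ∈ O(2)`, `Q` maps the set `{v1, v2, v3}` to itself and fixes ε iff
`Q ∈ {I, R_{2π/3}, R_{2π/3}²}`: the structural tensor set `{v1, v2, v3, ε}`
characterizes the 2D point group `C3` of rotations by multiples of `2π/3`. -/
theorem stmt_6 (Q : Matrix (Fin 2) (Fin 2) ℝ) (hQ : Q * Qᵀ = 1) :
    (({Q.mulVec v1, Q.mulVec v2, Q.mulVec v3} : Set (Fin 2 → ℝ)) = {v1, v2, v3} ∧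
      Q * eps * Qᵀ = eps) ↔
    (Q = 1 ∨ Q = rot2PiOver3 ∨ Q = rot2PiOver3 ^ 2) := by
  constructor
  · rintro ⟨hset, heps⟩
    have hQTQ : Qᵀ * Q = 1 := mul_eq_one_comm.mp hQ
    have hcomm : Q * eps = eps * Q := by
      have h := congrArg (· * Q) heps
      simpa [mul_assoc, hQTQ] using h
    have hc : Q 1 0 = -(Q 0 1) := by
      have := congrFun (congrFun hcomm 0) 0
      simp [Matrix.mul_apply, Fin.sum_univ_two, eps] at this
      linarith
    have hd : Q 1 1 = Q 0 0 := by
      have := congrFun (congrFun hcomm 0) 1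
      simp [Matrix.mul_apply, Fin.sum_univ_two, eps] at this
      linarith
    have hmem : Q.mulVec v1 ∈ ({v1, v2, v3} : Set (Fin 2 → ℝ)) := by
      rw [← hset]; left; rfl
    have hQv1 : Q.mulVec v1 = ![Q 0 1, Q 1 1] := by
      rw [show v1 = ![(0:ℝ), 1] from rfl, mulVec2]; norm_num
    rw [hQv1] at hmem
    simp only [Set.mem_insert_iff, Set.mem_singleton_iff] at hmem
    rcases hmem with h | h | h
    · left
      have hb := congrFun h 0
      have hdd := congrFun h 1
      simp [v1] at hb hdd
      ext i j
      fin_cases i <;> fin_cases j <;>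
        simp [Matrix.one_apply] <;> [skip; exact hb; skip; skip] <;>
        first
        | (rw [hd] at hdd ⊢; linarith)
        | (rw [hc, hb]; ring)
        | linarith
    · right; right
      have hb := congrFun h 0
      have hdd := congrFun h 1
      simp [v2] at hb hdd
      rw [hd] at hdd
      rw [rot_sq]
      ext i j
      fin_cases i <;> fin_cases j <;> simp [hd, hc, hb, hdd] <;> linarith
    · right; left
      have hb := congrFun h 0
      have hdd := congrFun h 1
      simp [v3] at hb hdd
      rw [hd] at hdd
      ext i j
      fin_cases i <;> fin_cases j <;> simp [rot2PiOver3, hd, hc, hb, hdd] <;> linarith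
  · intro h
    have hR1 : rot2PiOver3.mulVec v1 = v3 := by
      rw [show v1 = ![(0:ℝ), 1] from rfl, mulVec2]
      simp [rot2PiOver3, v3]
    have hR2 : rot2PiOver3.mulVec v2 = v1 := by
      rw [show v2 = ![Real.sqrt 3 / 2, -(1/2 : ℝ)] from rfl, mulVec2]
      funext i; fin_cases i <;> simp [rot2PiOver3, v1] <;> nlinarith [s3]
    have hR3 : rot2PiOver3.mulVec v3 = v2 := by
      rw [show v3 = ![-(Real.sqrt 3 / 2), -(1/2 : ℝ)] from rfl, mulVec2]
      funext i; fin_cases i <;> simp [rot2PiOver3, v2] <;> nlinarith [s3]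
    have hS1 : (rot2PiOver3 ^ 2).mulVec v1 = v2 := by
      rw [rot_sq, show v1 = ![(0:ℝ), 1] from rfl, mulVec2]
      simp [v2]
    have hS2 : (rot2PiOver3 ^ 2).mulVec v2 = v3 := by
      rw [rot_sq, show v2 = ![Real.sqrt 3 / 2, -(1/2 : ℝ)] from rfl, mulVec2]
      funext i; fin_cases i <;> simp [v3] <;> nlinarith [s3]
    have hS3 : (rot2PiOver3 ^ 2).mulVec v3 = v1 := by
      rw [rot_sq, show v3 = ![-(Real.sqrt 3 / 2), -(1/2 : ℝ)] from rfl, mulVec2]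
      funext i; fin_cases i <;> simp [v1] <;> nlinarith [s3]
    rcases h with rfl | rfl | rfl
    · constructor
      · simp
      · simp
    · refine ⟨?_, ?_⟩
      · rw [hR1, hR2, hR3]
        ext x; simp [Set.mem_insert_iff]; tauto
      · have hT : rot2PiOver3ᵀ = !![-(1/2), Real.sqrt 3 / 2; -(Real.sqrt 3 / 2), -(1/2)] := by
          ext i j; fin_cases i <;> fin_cases j <;> simp [rot2PiOver3]
        rw [hT]
        ext i j
        fin_cases i <;> fin_cases j <;>
          simp [rot2PiOver3, eps, Matrix.mul_apply, Fin.sum_univ_two] <;>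
          nlinarith [s3]
    · refine ⟨?_, ?_⟩
      · rw [hS1, hS2, hS3]
        ext x; simp [Set.mem_insert_iff]; tauto
      · have hT : (rot2PiOver3 ^ 2)ᵀ = !![-(1/2), -(Real.sqrt 3 / 2); Real.sqrt 3 / 2, -(1/2)] := by
          rw [rot_sq]; ext i j; fin_cases i <;> fin_cases j <;> simp
        rw [hT, rot_sq]
        ext i j
        fin_cases i <;> fin_cases j <;>
          simp [eps, Matrix.mul_apply, Fin.sum_univ_two] <;>
          nlinarith [s3]
end

section
/- Let T be a map from real 2×2 matrices to real 2×2 matrices such that T(C) is symmetric whenever C is symmetric, and suppose T is isotropic: Q T(C) Qᵀ = T(Q C Qᵀ) for every Q ∈ O(2) and every symmetric C. Then for every symmetric C there exist real scalars a and b with T(C) = a·I + b·C, where I is the 2×2 identity matrix. (Representation of isotropic 2nd-order symmetric tensor-valued functions of one symmetric tensor in 2D: the tensor generators are I and C.) -/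
open Matrix

lemma diag_case (T : Matrix (Fin 2) (Fin 2) ℝ → Matrix (Fin 2) (Fin 2) ℝ)
    (hsym : ∀ C : Matrix (Fin 2) (Fin 2) ℝ, Cᵀ = C → (T C)ᵀ = T C)
    (hiso : ∀ (Q C : Matrix (Fin 2) (Fin 2) ℝ), Q * Qᵀ = 1 → Cᵀ = C →
      Q * T C * Qᵀ = T (Q * C * Qᵀ)) (d : Fin 2 → ℝ) :
    ∃ a b : ℝ, T (diagonal d) = a • (1 : Matrix (Fin 2) (Fin 2) ℝ) + b • diagonal d := by
  set D := diagonal d with hD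
  have hDsym : Dᵀ = D := (Matrix.diagonal_transpose d)
  set M := T D with hM
  have hMsym : Mᵀ = M := hsym D hDsym
  have h10 : M 1 0 = M 0 1 := by
    conv_lhs => rw [← hMsym]
    rfl
  -- reflection R = diag(1,-1)
  have hR : (!![1,0;0,-1] : Matrix (Fin 2) (Fin 2) ℝ) * (!![1,0;0,-1] : Matrix (Fin 2) (Fin 2) ℝ)ᵀ = 1 := by
    ext i j
    simp only [Matrix.mul_apply, Fin.sum_univ_two, Matrix.transpose_apply]
    fin_cases i <;> fin_cases j <;> norm_num [Matrix.one_apply]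
  have hRD : (!![1,0;0,-1] : Matrix (Fin 2) (Fin 2) ℝ) * D * (!![1,0;0,-1] : Matrix (Fin 2) (Fin 2) ℝ)ᵀ = D := by
    ext i j
    simp only [Matrix.mul_apply, Fin.sum_univ_two, Matrix.transpose_apply]
    fin_cases i <;> fin_cases j <;> norm_num [hD, Matrix.diagonal_apply]
  have hRM := hiso !![1,0;0,-1] D hR hDsym
  rw [hRD, ← hM] at hRM
  have h01 : M 0 1 = 0 := by
    have h := congrFun (congrFun hRM 0) 1
    simp only [Matrix.mul_apply, Fin.sum_univ_two, Matrix.transpose_apply] at h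
    norm_num at h
    linarith
  by_cases hd : d 0 = d 1
  · -- D = scalar, use swap
    have hS : (!![0,1;1,0] : Matrix (Fin 2) (Fin 2) ℝ) * (!![0,1;1,0] : Matrix (Fin 2) (Fin 2) ℝ)ᵀ = 1 := by
      ext i j
      simp only [Matrix.mul_apply, Fin.sum_univ_two, Matrix.transpose_apply]
      fin_cases i <;> fin_cases j <;> norm_num [Matrix.one_apply]
    have hSD : (!![0,1;1,0] : Matrix (Fin 2) (Fin 2) ℝ) * D * (!![0,1;1,0] : Matrix (Fin 2) (Fin 2) ℝ)ᵀ = D := by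
      ext i j
      simp only [Matrix.mul_apply, Fin.sum_univ_two, Matrix.transpose_apply]
      fin_cases i <;> fin_cases j <;> norm_num [hD, Matrix.diagonal_apply, hd]
    have hSM := hiso !![0,1;1,0] D hS hDsym
    rw [hSD, ← hM] at hSM
    have heq : M 1 1 = M 0 0 := by
      have h := congrFun (congrFun hSM 0) 0
      simp only [Matrix.mul_apply, Fin.sum_univ_two, Matrix.transpose_apply] at h
      norm_num at h
      linarith
    refine ⟨M 0 0, 0, ?_⟩
    ext i j
    fin_cases i <;> fin_cases j <;>
      simp [Matrix.one_apply, h01, h10, heq, hD, Matrix.diagonal_apply]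
  · refine ⟨M 0 0 - (M 0 0 - M 1 1) / (d 0 - d 1) * d 0, (M 0 0 - M 1 1) / (d 0 - d 1), ?_⟩
    have hne : d 0 - d 1 ≠ 0 := sub_ne_zero.mpr hd
    ext i j
    fin_cases i <;> fin_cases j <;>
      simp [Matrix.one_apply, h01, h10, hD, Matrix.diagonal_apply] <;> field_simp <;> ring

/-- Representation of isotropic 2nd-order symmetric-tensor-valued functions of one
symmetric tensor in 2D: if `T` maps symmetric matrices to symmetric matrices and
`Q T(C) Qᵀ = T(Q C Qᵀ)` for every `Q ∈ O(2)`, then `T(C) = a I + b C` for suitable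
scalars `a`, `b` (the tensor generators are `I` and `C`). -/
theorem stmt_10 (T : Matrix (Fin 2) (Fin 2) ℝ → Matrix (Fin 2) (Fin 2) ℝ)
    (hsym : ∀ C : Matrix (Fin 2) (Fin 2) ℝ, Cᵀ = C → (T C)ᵀ = T C)
    (hiso : ∀ (Q C : Matrix (Fin 2) (Fin 2) ℝ), Q * Qᵀ = 1 → Cᵀ = C →
      Q * T C * Qᵀ = T (Q * C * Qᵀ)) :
    ∀ C : Matrix (Fin 2) (Fin 2) ℝ, Cᵀ = C →
      ∃ a b : ℝ, T C = a • (1 : Matrix (Fin 2) (Fin 2) ℝ) + b • C := by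
  intro C hC
  have hherm : C.IsHermitian := by
    rw [Matrix.IsHermitian, Matrix.conjTranspose]
    simp only [Matrix.map, starRingEnd_apply, star_trivial]
    exact hC
  set U : Matrix (Fin 2) (Fin 2) ℝ := (hherm.eigenvectorUnitary : Matrix (Fin 2) (Fin 2) ℝ) with hU
  have hspec : C = U * diagonal (RCLike.ofReal ∘ hherm.eigenvalues) * star U :=
    hherm.spectral_theorem
  have hUstar : star U * U = 1 := (Matrix.mem_unitaryGroup_iff').mp hherm.eigenvectorUnitary.2
  have hUstar' : U * star U = 1 := (Matrix.mem_unitaryGroup_iff).mp hherm.eigenvectorUnitary.2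
  have hsU : star U = Uᵀ := by
    ext i j
    simp [Matrix.star_apply]
  have hQQ : Uᵀ * (Uᵀ)ᵀ = 1 := by rw [Matrix.transpose_transpose, ← hsU]; exact hUstar
  have hdiag : Uᵀ * C * (Uᵀ)ᵀ = diagonal (RCLike.ofReal ∘ hherm.eigenvalues) := by
    rw [Matrix.transpose_transpose, ← hsU]
    conv_lhs => rw [hspec]
    simp only [← Matrix.mul_assoc]
    rw [hUstar, Matrix.one_mul, Matrix.mul_assoc, hUstar, Matrix.mul_one]
  obtain ⟨a, b, hab⟩ := diag_case T hsym hiso (RCLike.ofReal ∘ hherm.eigenvalues)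
  have key := hiso Uᵀ C hQQ hC
  rw [hdiag, hab] at key
  refine ⟨a, b, ?_⟩
  have h2 : U * (Uᵀ * T C * (Uᵀ)ᵀ) * star U =
      U * (a • (1 : Matrix (Fin 2) (Fin 2) ℝ) + b • diagonal (RCLike.ofReal ∘ hherm.eigenvalues)) * star U := by
    rw [key]
  rw [Matrix.transpose_transpose, ← hsU] at h2
  have lhs : U * (star U * T C * U) * star U = T C := by
    simp only [← Matrix.mul_assoc]
    rw [hUstar', Matrix.one_mul, Matrix.mul_assoc, hUstar', Matrix.mul_one]
  rw [lhs] at h2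
  rw [h2, Matrix.mul_add, Matrix.add_mul]
  congr 1
  · rw [Matrix.mul_smul, Matrix.smul_mul, Matrix.mul_one, hUstar']
  · rw [Matrix.mul_smul, Matrix.smul_mul]
    congr 1
    exact hspec.symm
end

section
/- Let ε = [[0,1],[−1,0]] and let T be a map from real 2×2 matrices to real 2×2 matrices such that T(C) is symmetric whenever C is symmetric, and suppose T is hemitropic: Q T(C) Qᵀ = T(Q C Qᵀ) for every Q ∈ SO(2) and every symmetric C. Then for every symmetric C there exist real scalars a, b, c with T(C) = a·I + b·C + c·(Cε − εC), where I is the 2×2 identity matrix. (Representation of C∞-invariant 2nd-order symmetric tensor-valued functions of one symmetric tensor in 2D: the tensor generators are I, C, and Cε − εC.) -/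
open Matrix

/-- Representation of hemitropic (`C∞`-invariant) 2nd-order symmetric-tensor-valued
functions of one symmetric tensor in 2D: if `T` maps symmetric matrices to symmetric
matrices and `Q T(C) Qᵀ = T(Q C Qᵀ)` for every `Q ∈ SO(2)`, then
`T(C) = a I + b C + c (Cε − εC)` for suitable scalars `a`, `b`, `c`
(the tensor generators are `I`, `C`, and `Cε − εC`). -/
theorem stmt_11 (T : Matrix (Fin 2) (Fin 2) ℝ → Matrix (Fin 2) (Fin 2) ℝ)
    (hsym : ∀ C : Matrix (Fin 2) (Fin 2) ℝ, Cᵀ = C → (T C)ᵀ = T C)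
    (hhemi : ∀ (Q C : Matrix (Fin 2) (Fin 2) ℝ), Q * Qᵀ = 1 → Q.det = 1 → Cᵀ = C →
      Q * T C * Qᵀ = T (Q * C * Qᵀ)) :
    ∀ C : Matrix (Fin 2) (Fin 2) ℝ, Cᵀ = C →
      ∃ a b c : ℝ, T C = a • (1 : Matrix (Fin 2) (Fin 2) ℝ) + b • C +
        c • (C * eps - eps * C) := by
  intro C hC
  have hC10 : C 1 0 = C 0 1 := by
    have := congrFun (congrFun hC 1) 0
    simpa [Matrix.transpose_apply] using this.symm
  have hTsym := hsym C hC
  have hT10 : T C 1 0 = T C 0 1 := by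
    have := congrFun (congrFun hTsym 1) 0
    simpa [Matrix.transpose_apply] using this.symm
  by_cases hgen : C 0 1 = 0 ∧ C 0 0 = C 1 1
  · -- C is a multiple of the identity
    obtain ⟨hq, hpr⟩ := hgen
    have hQ : eps * epsᵀ = 1 := by
      ext i j
      fin_cases i <;> fin_cases j <;>
        simp [eps, Matrix.mul_apply, Fin.sum_univ_two, Matrix.vecMul, dotProduct, Matrix.vecHead, Matrix.vecTail, Matrix.cons_val_zero, Matrix.cons_val_one, Matrix.head_cons, Matrix.transpose_apply, Matrix.one_apply]
    have hdet : eps.det = 1 := by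
      simp [eps, Matrix.det_fin_two]
    have heps : eps * C * epsᵀ = C := by
      ext i j
      fin_cases i <;> fin_cases j <;>
        simp [eps, Matrix.mul_apply, Fin.sum_univ_two, Matrix.vecMul, dotProduct, Matrix.vecHead, Matrix.vecTail, Matrix.cons_val_zero, Matrix.cons_val_one, Matrix.head_cons, Matrix.transpose_apply, hq, hC10, hpr]
    have key : eps * T C * epsᵀ = T C := by
      rw [hhemi eps C hQ hdet hC, heps]
    have h00 : T C 1 1 = T C 0 0 := by
      have := congrFun (congrFun key 0) 0
      simpa [eps, Matrix.mul_apply, Fin.sum_univ_two, Matrix.vecMul, dotProduct, Matrix.vecHead, Matrix.vecTail, Matrix.cons_val_zero, Matrix.cons_val_one, Matrix.head_cons, Matrix.transpose_apply] using this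
    have h01 : T C 0 1 = 0 := by
      have := congrFun (congrFun key 0) 1
      simp [eps, Matrix.mul_apply, Fin.sum_univ_two, Matrix.vecMul, dotProduct, Matrix.vecHead, Matrix.vecTail, Matrix.cons_val_zero, Matrix.cons_val_one, Matrix.head_cons, Matrix.transpose_apply, hT10] at this
      linarith
    refine ⟨T C 0 0, 0, 0, ?_⟩
    ext i j
    fin_cases i <;> fin_cases j <;>
      simp [Matrix.one_apply, h00, h01, hT10]
  · -- generic case: I, C, Cε−εC span the symmetric matrices
    push_neg at hgen
    set p := C 0 0 with hp
    set q := C 0 1 with hqdef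
    set r := C 1 1 with hr
    set x := T C 0 0 with hx
    set y := T C 0 1 with hy
    set z := T C 1 1 with hz
    have hΔ : (p - r) ^ 2 + 4 * q ^ 2 ≠ 0 := by
      intro h
      have hq0 : q = 0 := by nlinarith [sq_nonneg (p - r), sq_nonneg q]
      have hpr : p = r := by nlinarith [sq_nonneg (p - r), sq_nonneg q]
      exact (hgen hq0) hpr
    set Δ := (p - r) ^ 2 + 4 * q ^ 2 with hΔdef
    refine ⟨x - (((x - z) * (p - r) + 4 * q * y) / Δ) * p +
        2 * ((y * (p - r) - q * (x - z)) / Δ) * q,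
      ((x - z) * (p - r) + 4 * q * y) / Δ,
      (y * (p - r) - q * (x - z)) / Δ, ?_⟩
    ext i j
    fin_cases i <;> fin_cases j <;>
      simp [eps, Matrix.mul_apply, Fin.sum_univ_two, Matrix.vecMul, dotProduct, Matrix.vecHead, Matrix.vecTail, Matrix.cons_val_zero, Matrix.cons_val_one, Matrix.head_cons, Matrix.transpose_apply, Matrix.one_apply, hC10, hT10,
        ← hp, ← hqdef, ← hr, ← hx, ← hy, ← hz] <;>
      field_simp <;> ring
end

section
/- Let M1 = [[1,0],[0,0]] and M2 = [[0,0],[0,1]], and let G be the subgroup of O(2) generated by the rotation R_{π/2} = [[0,−1],[1,0]] and the reflection [[1,0],[0,−1]] (the dihedral group of order 8, the point group C4v). For real symmetric 2×2 matrices C and D, there exists Q ∈ G with D = Q C Qᵀ if and only if tr(C²) = tr(D²) and either (tr(C M1) = tr(D M1) and tr(C M2) = tr(D M2)) or (tr(C M1) = tr(D M2) and tr(C M2) = tr(D M1)). (Completeness of the functional basis {tr C², tr(C M1), tr(C M2)} with the permutation constraint for C4v scalar functions.) -/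
open Matrix

/-- The invariant relation. -/
def invRel (X Y : Matrix (Fin 2) (Fin 2) ℝ) : Prop :=
  (X * X).trace = (Y * Y).trace ∧
    (((X * M1).trace = (Y * M1).trace ∧ (X * M2).trace = (Y * M2).trace) ∨
      ((X * M1).trace = (Y * M2).trace ∧ (X * M2).trace = (Y * M1).trace))

lemma invRel_refl (X : Matrix (Fin 2) (Fin 2) ℝ) : invRel X X := ⟨rfl, Or.inl ⟨rfl, rfl⟩⟩

lemma invRel_symm {X Y : Matrix (Fin 2) (Fin 2) ℝ} (h : invRel X Y) : invRel Y X := by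
  obtain ⟨h1, h2 | h2⟩ := h
  · exact ⟨h1.symm, Or.inl ⟨h2.1.symm, h2.2.symm⟩⟩
  · exact ⟨h1.symm, Or.inr ⟨h2.2.symm, h2.1.symm⟩⟩

lemma invRel_trans {X Y Z : Matrix (Fin 2) (Fin 2) ℝ} (h : invRel X Y) (h' : invRel Y Z) :
    invRel X Z := by
  obtain ⟨h1, h2 | h2⟩ := h <;> obtain ⟨h3, h4 | h4⟩ := h'
  · exact ⟨h1.trans h3, Or.inl ⟨h2.1.trans h4.1, h2.2.trans h4.2⟩⟩
  · exact ⟨h1.trans h3, Or.inr ⟨h2.1.trans h4.1, h2.2.trans h4.2⟩⟩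
  · exact ⟨h1.trans h3, Or.inr ⟨h2.1.trans h4.2, h2.2.trans h4.1⟩⟩
  · exact ⟨h1.trans h3, Or.inl ⟨h2.1.trans h4.2, h2.2.trans h4.1⟩⟩

lemma invRel_rot (X : Matrix (Fin 2) (Fin 2) ℝ) :
    invRel X ((rotHalfPi : Matrix (Fin 2) (Fin 2) ℝ) * X * (rotHalfPi : Matrix (Fin 2) (Fin 2) ℝ)ᵀ) := by
  refine ⟨?_, Or.inr ⟨?_, ?_⟩⟩ <;>
    · simp only [Matrix.trace, Matrix.diag, Matrix.mul_apply, Matrix.transpose_apply,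
        Fin.sum_univ_two]
      norm_num [rotHalfPi, M1, M2]
      try ring

lemma invRel_refl' (X : Matrix (Fin 2) (Fin 2) ℝ) :
    invRel X ((reflX : Matrix (Fin 2) (Fin 2) ℝ) * X * (reflX : Matrix (Fin 2) (Fin 2) ℝ)ᵀ) := by
  refine ⟨?_, Or.inl ⟨?_, ?_⟩⟩ <;>
    · simp only [Matrix.trace, Matrix.diag, Matrix.mul_apply, Matrix.transpose_apply,
        Fin.sum_univ_two]
      norm_num [reflX, M1, M2]
      try ring

lemma coe_mul_transpose (P : Matrix.orthogonalGroup (Fin 2) ℝ) :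
    (P : Matrix (Fin 2) (Fin 2) ℝ) * (P : Matrix (Fin 2) (Fin 2) ℝ)ᵀ = 1 := by
  have := P.2
  rw [Matrix.mem_orthogonalGroup_iff] at this
  have h : star (P : Matrix (Fin 2) (Fin 2) ℝ) = (P : Matrix (Fin 2) (Fin 2) ℝ)ᵀ := by
    simp [Matrix.star_eq_conjTranspose, Matrix.conjTranspose]
    ext i j; simp [Matrix.map_apply]
  exact this

lemma coe_inv (P : Matrix.orthogonalGroup (Fin 2) ℝ) :
    ((P⁻¹ : Matrix.orthogonalGroup (Fin 2) ℝ) : Matrix (Fin 2) (Fin 2) ℝ)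
      = (P : Matrix (Fin 2) (Fin 2) ℝ)ᵀ := by
  simp [Matrix.UnitaryGroup.inv_apply, Matrix.star_eq_conjTranspose, Matrix.conjTranspose]
  ext i j; simp [Matrix.map_apply]

lemma invRel_of_mem {P : Matrix.orthogonalGroup (Fin 2) ℝ} (hP : P ∈ C4v)
    (X : Matrix (Fin 2) (Fin 2) ℝ) :
    invRel X ((P : Matrix (Fin 2) (Fin 2) ℝ) * X * (P : Matrix (Fin 2) (Fin 2) ℝ)ᵀ) := by
  induction hP using Subgroup.closure_induction generalizing X with
  | mem Q hQ =>
    rcases hQ with rfl | rfl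
    · exact invRel_rot X
    · exact invRel_refl' X
  | one => simpa using invRel_refl X
  | mul Q R hQ hR ihQ ihR =>
    have h1 := ihR X
    have h2 := ihQ ((R : Matrix (Fin 2) (Fin 2) ℝ) * X * (R : Matrix (Fin 2) (Fin 2) ℝ)ᵀ)
    have e : ((Q * R : Matrix.orthogonalGroup (Fin 2) ℝ) : Matrix (Fin 2) (Fin 2) ℝ) * X *
        ((Q * R : Matrix.orthogonalGroup (Fin 2) ℝ) : Matrix (Fin 2) (Fin 2) ℝ)ᵀ =
        (Q : Matrix (Fin 2) (Fin 2) ℝ) * ((R : Matrix (Fin 2) (Fin 2) ℝ) * X *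
          (R : Matrix (Fin 2) (Fin 2) ℝ)ᵀ) * (Q : Matrix (Fin 2) (Fin 2) ℝ)ᵀ := by
      push_cast
      rw [Matrix.transpose_mul]
      noncomm_ring
    rw [e]
    exact invRel_trans h1 h2
  | inv Q hQ ihQ =>
    rw [coe_inv, Matrix.transpose_transpose]
    have h := ihQ ((Q : Matrix (Fin 2) (Fin 2) ℝ)ᵀ * X * (Q : Matrix (Fin 2) (Fin 2) ℝ))
    have hQQ := coe_mul_transpose Q
    have hQQ' : (Q : Matrix (Fin 2) (Fin 2) ℝ)ᵀ * (Q : Matrix (Fin 2) (Fin 2) ℝ) = 1 := by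
      have := Matrix.mem_orthogonalGroup_iff' (Fin 2) ℝ |>.mp Q.2
      have hs : star (Q : Matrix (Fin 2) (Fin 2) ℝ) = (Q : Matrix (Fin 2) (Fin 2) ℝ)ᵀ := by
        simp [Matrix.star_eq_conjTranspose, Matrix.conjTranspose]
        ext i j; simp [Matrix.map_apply]
      exact this
    have e : (Q : Matrix (Fin 2) (Fin 2) ℝ) * ((Q : Matrix (Fin 2) (Fin 2) ℝ)ᵀ * X *
        (Q : Matrix (Fin 2) (Fin 2) ℝ)) * (Q : Matrix (Fin 2) (Fin 2) ℝ)ᵀ = X := by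
      calc (Q : Matrix (Fin 2) (Fin 2) ℝ) * ((Q : Matrix (Fin 2) (Fin 2) ℝ)ᵀ * X *
            (Q : Matrix (Fin 2) (Fin 2) ℝ)) * (Q : Matrix (Fin 2) (Fin 2) ℝ)ᵀ
          = ((Q : Matrix (Fin 2) (Fin 2) ℝ) * (Q : Matrix (Fin 2) (Fin 2) ℝ)ᵀ) * X *
            ((Q : Matrix (Fin 2) (Fin 2) ℝ) * (Q : Matrix (Fin 2) (Fin 2) ℝ)ᵀ) := by
            noncomm_ring
        _ = X := by rw [hQQ]; simp
    rw [e] at h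
    exact invRel_symm h

/-- For real symmetric 2×2 matrices `C`, `D`: `D = Q C Qᵀ` for some `Q ∈ C4v` iff
`tr C² = tr D²` and the pair `(tr(C M1), tr(C M2))` equals `(tr(D M1), tr(D M2))`
up to swapping. (Completeness of the functional basis `{tr C², tr(C M1), tr(C M2)}`
with the permutation constraint for `C4v` scalar functions.) -/
theorem stmt_13 (C D : Matrix (Fin 2) (Fin 2) ℝ) (hC : Cᵀ = C) (hD : Dᵀ = D) :
    (∃ P ∈ C4v, D = (P : Matrix (Fin 2) (Fin 2) ℝ) * C * (P : Matrix (Fin 2) (Fin 2) ℝ)ᵀ) ↔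
    ((C * C).trace = (D * D).trace ∧
      (((C * M1).trace = (D * M1).trace ∧ (C * M2).trace = (D * M2).trace) ∨
        ((C * M1).trace = (D * M2).trace ∧ (C * M2).trace = (D * M1).trace))) := by
  constructor
  · rintro ⟨P, hP, rfl⟩
    exact invRel_of_mem hP C
  · rintro ⟨h1, h2⟩
    have hC' : C 1 0 = C 0 1 := by
      have := congrFun (congrFun hC 0) 1
      simpa [Matrix.transpose_apply] using this
    have hD' : D 1 0 = D 0 1 := by
      have := congrFun (congrFun hD 0) 1
      simpa [Matrix.transpose_apply] using this
    have tm1 : ∀ X : Matrix (Fin 2) (Fin 2) ℝ, (X * M1).trace = X 0 0 := by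
      intro X; simp [M1, Matrix.trace, Matrix.mul_apply, Fin.sum_univ_two, Matrix.diag]
    have tm2 : ∀ X : Matrix (Fin 2) (Fin 2) ℝ, (X * M2).trace = X 1 1 := by
      intro X; simp [M2, Matrix.trace, Matrix.mul_apply, Fin.sum_univ_two, Matrix.diag]
    have tsq : ∀ X : Matrix (Fin 2) (Fin 2) ℝ, (X * X).trace =
        X 0 0 * X 0 0 + X 0 1 * X 1 0 + X 1 0 * X 0 1 + X 1 1 * X 1 1 := by
      intro X; simp [Matrix.trace, Matrix.mul_apply, Fin.sum_univ_two, Matrix.diag]; ring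
    rw [tsq, tsq] at h1
    rw [tm1, tm1, tm2, tm2] at h2
    rw [hC', hD'] at h1
    have hb : C 0 1 * C 0 1 = D 0 1 * D 0 1 := by
      rcases h2 with ⟨ha, hc⟩ | ⟨ha, hc⟩ <;> rw [ha, hc] at h1 <;> linarith
    have he : D 0 1 = C 0 1 ∨ D 0 1 = -C 0 1 := by
      rcases mul_self_eq_mul_self_iff.mp hb.symm with h | h
      · exact Or.inl h
      · exact Or.inr h
    rcases h2 with ⟨ha, hc⟩ | ⟨ha, hc⟩ <;> rcases he with he | he
    · refine ⟨1, one_mem _, ?_⟩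
      ext i j; fin_cases i <;> fin_cases j <;>
        · simp only [Matrix.mul_apply, Matrix.transpose_apply, Fin.sum_univ_two]
          norm_num [Matrix.one_apply]
          linarith
    · refine ⟨reflX, Subgroup.subset_closure (by simp), ?_⟩
      ext i j; fin_cases i <;> fin_cases j <;>
        · simp only [Matrix.mul_apply, Matrix.transpose_apply, Fin.sum_univ_two]
          norm_num [reflX]
          linarith
    · refine ⟨rotHalfPi * reflX, mul_mem (Subgroup.subset_closure (by simp))
        (Subgroup.subset_closure (by simp)), ?_⟩
      push_cast
      ext i j; fin_cases i <;> fin_cases j <;>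
        · simp only [Matrix.mul_apply, Matrix.transpose_apply, Fin.sum_univ_two]
          norm_num [rotHalfPi, reflX]
          linarith
    · refine ⟨rotHalfPi, Subgroup.subset_closure (by simp), ?_⟩
      ext i j; fin_cases i <;> fin_cases j <;>
        · simp only [Matrix.mul_apply, Matrix.transpose_apply, Fin.sum_univ_two]
          norm_num [rotHalfPi]
          linarith
end

section
/- Let v1 = (0,1), v2 = (√3/2, −1/2), v3 = (−√3/2, −1/2) in ℝ². If C and D are real symmetric 2×2 matrices with vᵢ · C vᵢ = vᵢ · D vᵢ for i = 1, 2, 3, then C = D. Equivalently, the linear map sending a symmetric 2×2 matrix C to the triple (v1·Cv1, v2·Cv2, v3·Cv3) ∈ ℝ³ is injective. (Completeness of the functional basis {v1·Cv1, v2·Cv2, v3·Cv3} used for the point groups C3, C3v, C6, C6v.) -/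
open Matrix

/-- If `C`, `D` are real symmetric 2×2 matrices with `vᵢ · C vᵢ = vᵢ · D vᵢ` for
`i = 1, 2, 3`, then `C = D`: the map `C ↦ (v1·Cv1, v2·Cv2, v3·Cv3)` is injective on
symmetric matrices. (Completeness of the functional basis `{v1·Cv1, v2·Cv2, v3·Cv3}`
used for the point groups `C3`, `C3v`, `C6`, `C6v`.) -/
theorem stmt_15 (C D : Matrix (Fin 2) (Fin 2) ℝ) (hC : Cᵀ = C) (hD : Dᵀ = D)
    (h1 : v1 ⬝ᵥ C.mulVec v1 = v1 ⬝ᵥ D.mulVec v1)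
    (h2 : v2 ⬝ᵥ C.mulVec v2 = v2 ⬝ᵥ D.mulVec v2)
    (h3 : v3 ⬝ᵥ C.mulVec v3 = v3 ⬝ᵥ D.mulVec v3) :
    C = D := by
  have hC01 : C 1 0 = C 0 1 := by
    have := congrFun (congrFun hC 0) 1; simpa [Matrix.transpose_apply] using this
  have hD01 : D 1 0 = D 0 1 := by
    have := congrFun (congrFun hD 0) 1; simpa [Matrix.transpose_apply] using this
  have hs : Real.sqrt 3 ^ 2 = 3 := Real.sq_sqrt (by norm_num)
  have hs0 : Real.sqrt 3 ≠ 0 := ne_of_gt (Real.sqrt_pos.mpr (by norm_num))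
  simp only [v1, v2, v3, dotProduct, mulVec, Fin.sum_univ_two, Matrix.cons_val_zero,
    Matrix.cons_val_one, Matrix.head_cons] at h1 h2 h3
  have e1 : C 1 1 = D 1 1 := by linear_combination h1
  have e0 : C 0 0 = D 0 0 := by
    linear_combination (2/3)*h2 + (2/3)*h3 - (1/3)*h1 - ((C 0 0 - D 0 0)/3)*hs
  have eb' : Real.sqrt 3 * (C 0 1 - D 0 1) = 0 := by
    linear_combination h3 - h2 - (Real.sqrt 3 / 2) * hC01 + (Real.sqrt 3 / 2) * hD01
  have eb : C 0 1 = D 0 1 := by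
    rcases mul_eq_zero.mp eb' with h | h
    · exact absurd h hs0
    · linarith
  ext i j
  fin_cases i <;> fin_cases j <;>
    simp [e0, e1, eb, hC01.trans (eb.trans hD01.symm)]
end

section
/- Let v1 = (0,1), v2 = (√3/2, −1/2), v3 = (−√3/2, −1/2) in ℝ², R = R_{2π/3} = [[−1/2, −√3/2],[√3/2, −1/2]], and G = {I, R, R²} (the point group C3). For real symmetric 2×2 matrices C and D, there exists Q ∈ G with D = Q C Qᵀ if and only if the triple (v1·C v1, v2·C v2, v3·C v3) is a cyclic permutation of the triple (v1·D v1, v2·D v2, v3·D v3), i.e. equals (t1,t2,t3), (t2,t3,t1), or (t3,t1,t2), where tᵢ = vᵢ·D vᵢ. (Completeness of the functional basis {v1·Cv1, v2·Cv2, v3·Cv3} with the cyclic constraint for C3 scalar functions.) -/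
open Matrix

section Aux

private lemma hs2' : Real.sqrt 3 ^ 2 = 3 := Real.sq_sqrt (by norm_num)

private lemma hs3' : Real.sqrt 3 ^ 3 = 3 * Real.sqrt 3 := by rw [pow_succ, hs2']

private lemma hs4' : Real.sqrt 3 ^ 4 = 9 := by
  rw [show (4:ℕ) = 2*2 from rfl, pow_mul, hs2']; norm_num

private lemma hs5' : Real.sqrt 3 ^ 5 = 9 * Real.sqrt 3 := by rw [pow_succ, hs4']

private lemma hs6' : Real.sqrt 3 ^ 6 = 27 := by
  rw [show (6:ℕ) = 5+1 from rfl, pow_succ, hs5']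
  rw [mul_assoc, Real.mul_self_sqrt (by norm_num)]; norm_num

private lemma symm_conj (Q M : Matrix (Fin 2) (Fin 2) ℝ) (hM : Mᵀ = M) :
    (Q * M * Qᵀ)ᵀ = Q * M * Qᵀ := by
  simp [Matrix.transpose_mul, Matrix.mul_assoc, hM]

private lemma compA1 (M : Matrix (Fin 2) (Fin 2) ℝ) :
    v1 ⬝ᵥ (rot2PiOver3 * M * rot2PiOver3ᵀ).mulVec v1 = v2 ⬝ᵥ M.mulVec v2 := by
  simp only [v1, v2, rot2PiOver3, dotProduct, mulVec, mul_apply, transpose_apply,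
    Fin.sum_univ_two, Matrix.cons_val_zero, Matrix.cons_val_one, Matrix.head_cons,
    Matrix.of_apply, Matrix.cons_val', Matrix.empty_val', Matrix.cons_val_fin_one,
    Matrix.head_fin_const]
  try ring_nf
  try simp only [hs2', hs3', hs4', hs5', hs6']
  try ring_nf

private lemma compA2 (M : Matrix (Fin 2) (Fin 2) ℝ) :
    v2 ⬝ᵥ (rot2PiOver3 * M * rot2PiOver3ᵀ).mulVec v2 = v3 ⬝ᵥ M.mulVec v3 := by
  simp only [v2, v3, rot2PiOver3, dotProduct, mulVec, mul_apply, transpose_apply,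
    Fin.sum_univ_two, Matrix.cons_val_zero, Matrix.cons_val_one, Matrix.head_cons,
    Matrix.of_apply, Matrix.cons_val', Matrix.empty_val', Matrix.cons_val_fin_one,
    Matrix.head_fin_const]
  try ring_nf
  try simp only [hs2', hs3', hs4', hs5', hs6']
  try ring_nf

private lemma compA3 (M : Matrix (Fin 2) (Fin 2) ℝ) :
    v3 ⬝ᵥ (rot2PiOver3 * M * rot2PiOver3ᵀ).mulVec v3 = v1 ⬝ᵥ M.mulVec v1 := by
  simp only [v3, v1, rot2PiOver3, dotProduct, mulVec, mul_apply, transpose_apply,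
    Fin.sum_univ_two, Matrix.cons_val_zero, Matrix.cons_val_one, Matrix.head_cons,
    Matrix.of_apply, Matrix.cons_val', Matrix.empty_val', Matrix.cons_val_fin_one,
    Matrix.head_fin_const]
  try ring_nf
  try simp only [hs2', hs3', hs4', hs5', hs6']
  try ring_nf

private lemma compB1 (M : Matrix (Fin 2) (Fin 2) ℝ) :
    v1 ⬝ᵥ (rot2PiOver3 ^ 2 * M * (rot2PiOver3 ^ 2)ᵀ).mulVec v1 = v3 ⬝ᵥ M.mulVec v3 := by
  simp only [v1, v3, rot2PiOver3, pow_two, dotProduct, mulVec, mul_apply, transpose_apply,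
    Fin.sum_univ_two, Matrix.cons_val_zero, Matrix.cons_val_one, Matrix.head_cons,
    Matrix.of_apply, Matrix.cons_val', Matrix.empty_val', Matrix.cons_val_fin_one,
    Matrix.head_fin_const]
  try ring_nf
  try simp only [hs2', hs3', hs4', hs5', hs6']
  try ring_nf

private lemma compB2 (M : Matrix (Fin 2) (Fin 2) ℝ) :
    v2 ⬝ᵥ (rot2PiOver3 ^ 2 * M * (rot2PiOver3 ^ 2)ᵀ).mulVec v2 = v1 ⬝ᵥ M.mulVec v1 := by
  simp only [v2, v1, rot2PiOver3, pow_two, dotProduct, mulVec, mul_apply, transpose_apply,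
    Fin.sum_univ_two, Matrix.cons_val_zero, Matrix.cons_val_one, Matrix.head_cons,
    Matrix.of_apply, Matrix.cons_val', Matrix.empty_val', Matrix.cons_val_fin_one,
    Matrix.head_fin_const]
  try ring_nf
  try simp only [hs2', hs3', hs4', hs5', hs6']
  try ring_nf

private lemma compB3 (M : Matrix (Fin 2) (Fin 2) ℝ) :
    v3 ⬝ᵥ (rot2PiOver3 ^ 2 * M * (rot2PiOver3 ^ 2)ᵀ).mulVec v3 = v2 ⬝ᵥ M.mulVec v2 := by
  simp only [v3, v2, rot2PiOver3, pow_two, dotProduct, mulVec, mul_apply, transpose_apply,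
    Fin.sum_univ_two, Matrix.cons_val_zero, Matrix.cons_val_one, Matrix.head_cons,
    Matrix.of_apply, Matrix.cons_val', Matrix.empty_val', Matrix.cons_val_fin_one,
    Matrix.head_fin_const]
  try ring_nf
  try simp only [hs2', hs3', hs4', hs5', hs6']
  try ring_nf

/-- A symmetric 2×2 matrix is determined by its quadratic form on `v1, v2, v3`. -/
private lemma key (M N : Matrix (Fin 2) (Fin 2) ℝ) (hM : Mᵀ = M) (hN : Nᵀ = N)
    (h1 : v1 ⬝ᵥ M.mulVec v1 = v1 ⬝ᵥ N.mulVec v1)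
    (h2 : v2 ⬝ᵥ M.mulVec v2 = v2 ⬝ᵥ N.mulVec v2)
    (h3 : v3 ⬝ᵥ M.mulVec v3 = v3 ⬝ᵥ N.mulVec v3) : M = N := by
  have hM01 : M 1 0 = M 0 1 := by
    have := congrFun (congrFun hM 0) 1; simpa using this
  have hN01 : N 1 0 = N 0 1 := by
    have := congrFun (congrFun hN 0) 1; simpa using this
  simp only [v1, v2, v3, dotProduct, mulVec, Fin.sum_univ_two,
    Matrix.cons_val_zero, Matrix.cons_val_one, Matrix.head_cons] at h1 h2 h3
  have g11 : M 1 1 = N 1 1 := by linear_combination h1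
  have e00 : (3:ℝ) * M 0 0 = 3 * N 0 0 := by
    linear_combination 2*h2 + 2*h3 - h1 + (N 0 0 - M 0 0) * hs2'
  have g00 : M 0 0 = N 0 0 := by linarith
  have e01 : Real.sqrt 3 * M 0 1 = Real.sqrt 3 * N 0 1 := by
    linear_combination h3 - h2 - (Real.sqrt 3 / 2) * hM01 + (Real.sqrt 3 / 2) * hN01
  have g01 : M 0 1 = N 0 1 := mul_left_cancel₀ (by positivity) e01
  ext i j
  fin_cases i <;> fin_cases j
  · exact g00
  · exact g01
  · show M 1 0 = N 1 0
    rw [hM01, hN01]; exact g01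
  · exact g11

end Aux

/-- For real symmetric 2×2 matrices `C`, `D`: `D = Q C Qᵀ` for some `Q` in the point
group `C3 = {I, R_{2π/3}, R_{2π/3}²}` iff the triple `(v1·Cv1, v2·Cv2, v3·Cv3)` is a
cyclic permutation of `(v1·Dv1, v2·Dv2, v3·Dv3)`. (Completeness of the functional
basis `{v1·Cv1, v2·Cv2, v3·Cv3}` with the cyclic constraint for `C3` scalar
functions.) -/
theorem stmt_17 (C D : Matrix (Fin 2) (Fin 2) ℝ) (hC : Cᵀ = C) (hD : Dᵀ = D) :
    (∃ Q ∈ ({1, rot2PiOver3, rot2PiOver3 ^ 2} : Set (Matrix (Fin 2) (Fin 2) ℝ)),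
      D = Q * C * Qᵀ) ↔
    ((v1 ⬝ᵥ C.mulVec v1 = v1 ⬝ᵥ D.mulVec v1 ∧ v2 ⬝ᵥ C.mulVec v2 = v2 ⬝ᵥ D.mulVec v2 ∧
        v3 ⬝ᵥ C.mulVec v3 = v3 ⬝ᵥ D.mulVec v3) ∨
      (v1 ⬝ᵥ C.mulVec v1 = v2 ⬝ᵥ D.mulVec v2 ∧ v2 ⬝ᵥ C.mulVec v2 = v3 ⬝ᵥ D.mulVec v3 ∧
        v3 ⬝ᵥ C.mulVec v3 = v1 ⬝ᵥ D.mulVec v1) ∨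
      (v1 ⬝ᵥ C.mulVec v1 = v3 ⬝ᵥ D.mulVec v3 ∧ v2 ⬝ᵥ C.mulVec v2 = v1 ⬝ᵥ D.mulVec v1 ∧
        v3 ⬝ᵥ C.mulVec v3 = v2 ⬝ᵥ D.mulVec v2)) := by
  constructor
  · rintro ⟨Q, hQ, rfl⟩
    simp only [Set.mem_insert_iff, Set.mem_singleton_iff] at hQ
    rcases hQ with rfl | rfl | rfl
    · left
      refine ⟨?_, ?_, ?_⟩ <;> simp [Matrix.transpose_one]
    · right; right
      exact ⟨(compA3 C).symm, (compA1 C).symm, (compA2 C).symm⟩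
    · right; left
      exact ⟨(compB2 C).symm, (compB3 C).symm, (compB1 C).symm⟩
  · rintro (⟨h1, h2, h3⟩ | ⟨h1, h2, h3⟩ | ⟨h1, h2, h3⟩)
    · exact ⟨1, Set.mem_insert _ _, by
        simpa [Matrix.transpose_one] using (key C D hC hD h1 h2 h3).symm⟩
    · refine ⟨rot2PiOver3 ^ 2, by simp, ?_⟩
      exact key D _ hD (symm_conj _ _ hC) (h3.symm.trans (compB1 C).symm)
        (h1.symm.trans (compB2 C).symm) (h2.symm.trans (compB3 C).symm)
    · refine ⟨rot2PiOver3, by simp, ?_⟩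
      exact key D _ hD (symm_conj _ _ hC) (h2.symm.trans (compA1 C).symm)
        (h3.symm.trans (compA2 C).symm) (h1.symm.trans (compA3 C).symm)
end
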